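/- arXiv:2105.08353 — 2 statements merged into one kernel-verified Lean document; each statement's English description precedes it below -/
import Mathlib

section
/- Let Σ be a nonempty finite type and P : Set (ℕ → Σ) a boolean property. Then P is safe if and only if there exists a function v : List Σ → Bool such that: for all finite traces s, t with s a prefix of t, v t = true implies v s = true; and for every infinite trace f, f ∈ P ↔ (∀ n : ℕ, v (f↾n) = true). -/
/-- The length-`n` prefix of an infinite trace `f`. -/
def pref {A : Type*} (f : ℕ → A) (n : ℕ) : List A := List.ofFn (fun i : Fin n => f i.1)

/-- The infinite trace obtained by prepending the finite trace `s` to the infinite trace `f`. -/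
def ext {A : Type*} (s : List A) (f : ℕ → A) : ℕ → A :=
  fun n => if h : n < s.length then s.get ⟨n, h⟩ else f (n - s.length)

/-- `s` negatively determines `P`. -/
def NegDet {A : Type*} (P : Set (ℕ → A)) (s : List A) : Prop := ∀ f : ℕ → A, ext s f ∉ P

/-- `P` is a safety property. -/
def Safe {A : Type*} (P : Set (ℕ → A)) : Prop :=
  ∀ f : ℕ → A, f ∉ P → ∃ n : ℕ, NegDet P (pref f n)

lemma ext_append {A : Type*} (s r : List A) (f : ℕ → A) :
    ext (s ++ r) f = ext s (ext r f) := by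
  funext n
  simp only [ext, List.length_append, List.get_eq_getElem]
  by_cases h1 : n < s.length
  · rw [dif_pos (by omega), dif_pos h1, List.getElem_append_left h1]
  · rw [dif_neg h1]
    by_cases h2 : n < s.length + r.length
    · rw [dif_pos h2, dif_pos (by omega), List.getElem_append_right (by omega)]
    · rw [dif_neg h2, dif_neg (by omega)]
      congr 1
      omega

lemma ext_pref {A : Type*} (f : ℕ → A) (n : ℕ) :
    ext (pref f n) (fun k => f (n + k)) = f := by
  funext m
  simp only [ext, pref, List.length_ofFn, List.get_eq_getElem, List.getElem_ofFn]
  split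
  · rfl
  · next h => congr 1; omega

lemma pref_ext {A : Type*} (f g : ℕ → A) (n : ℕ) :
    pref (ext (pref f n) g) n = pref f n := by
  simp only [pref, ext, List.length_ofFn]
  congr 1
  funext i
  rw [dif_pos i.2]
  simp

theorem safe_iff_verdict {A : Type*} [Fintype A] [Nonempty A] (P : Set (ℕ → A)) :
    Safe P ↔
    (∃ v : List A → Bool,
      (∀ s t : List A, s <+: t → v t = true → v s = true) ∧
      ∀ f : ℕ → A, f ∈ P ↔ (∀ n : ℕ, v (pref f n) = true)) := by
  classical
  constructor
  · intro hsafe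
    refine ⟨fun s => decide (∃ f, ext s f ∈ P), ?_, ?_⟩
    · intro s t hst h
      rw [decide_eq_true_iff] at h ⊢
      obtain ⟨f, hf⟩ := h
      obtain ⟨r, rfl⟩ := hst
      exact ⟨ext r f, by rwa [ext_append] at hf⟩
    · intro f
      constructor
      · intro hf n
        rw [decide_eq_true_iff]
        exact ⟨fun k => f (n + k), by rwa [ext_pref]⟩
      · intro h
        by_contra hf
        obtain ⟨n, hn⟩ := hsafe f hf
        have := h n
        rw [decide_eq_true_iff] at this
        obtain ⟨g, hg⟩ := this
        exact hn g hg
  · rintro ⟨v, hmono, hv⟩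
    intro f hf
    have : ¬ ∀ n, v (pref f n) = true := fun h => hf ((hv f).mpr h)
    push_neg at this
    obtain ⟨n, hn⟩ := this
    refine ⟨n, fun g hg => ?_⟩
    have := ((hv _).mp hg) n
    rw [pref_ext] at this
    exact hn this
end

section
/- Let Σ be a nonempty finite type and P : Set (ℕ → Σ) a reactivity property. Then there exists u : List Σ → Option Bool such that: (a) for every infinite trace f, it is not the case that both {n | u (f↾n) = some true} and {n | u (f↾n) = some false} are infinite; (b) for every infinite trace f and every b : Bool, if {n | u (f↾n) = some b} is infinite and {n | u (f↾n) = some (!b)} is finite, then (b = true ↔ f ∈ P); and (c) for every finite trace s there exists an infinite trace f such that, writing b := decide (s·f ∈ P), the set {n | u ((s·f)↾n) = some b} is infinite and the set {n | u ((s·f)↾n) = some (!b)} is finite. -/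
/-- `P` is a response property. -/
def Response {A : Type*} (P : Set (ℕ → A)) : Prop :=
  ∃ S : Set (List A), ∀ f : ℕ → A, f ∈ P ↔ {n : ℕ | pref f n ∈ S}.Infinite

/-- `P` is a persistence property. -/
def Persistence {A : Type*} (P : Set (ℕ → A)) : Prop :=
  ∃ S : Set (List A), ∀ f : ℕ → A, f ∈ P ↔ ∃ N : ℕ, ∀ n ≥ N, pref f n ∈ S

/-- `P` is a reactivity property. -/
def Reactivity {A : Type*} (P : Set (ℕ → A)) : Prop :=
  ∃ k : ℕ, 1 ≤ k ∧ ∃ R Q : Fin k → Set (ℕ → A),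
    (∀ i, Response (R i)) ∧ (∀ i, Persistence (Q i)) ∧ P = ⋂ i, (R i ∪ Q i)

attribute [local instance] Classical.propDecidable

open Filter

section

variable {A : Type*}

section Prefixes

@[simp] lemma pref_length (f : ℕ → A) (n : ℕ) : (pref f n).length = n := by simp [pref]

lemma pref_take (f : ℕ → A) (m n : ℕ) : (pref f n).take m = pref f (min m n) := by
  apply List.ext_getElem (by simp)
  intro i _ _
  simp [pref]

lemma pref_prefix (f : ℕ → A) {m n : ℕ} (h : m ≤ n) : pref f m <+: pref f n := by
  simpa [pref_take, h] using List.take_prefix m (pref f n)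

lemma prefix_pref_iff {f : ℕ → A} {t : List A} {n : ℕ} :
    t <+: pref f n ↔ t.length ≤ n ∧ pref f t.length = t := by
  constructor
  · intro h
    have hn : t.length ≤ n := by simpa using h.length_le
    refine ⟨hn, ?_⟩
    rw [List.prefix_iff_eq_take.1 h, pref_take, min_eq_left hn, pref_length]
  · rintro ⟨hn, ht⟩
    exact ht ▸ pref_prefix f hn

lemma pref_eq_of_prefix {f : ℕ → A} {t v : List A} (htv : t <+: v) (hv : pref f v.length = v) :
    pref f t.length = t :=
  (prefix_pref_iff.1 (hv ▸ htv)).2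

lemma prefix_or_prefix_of_pref_eq {f : ℕ → A} {t t' : List A} (ht : pref f t.length = t)
    (ht' : pref f t'.length = t') : t <+: t' ∨ t' <+: t :=
  List.prefix_or_prefix_of_prefix (prefix_pref_iff.2 ⟨le_max_left _ _, ht⟩)
    (prefix_pref_iff.2 ⟨le_max_right t.length t'.length, ht'⟩)

lemma pref_eq_pref_iff {f g : ℕ → A} {n : ℕ} : pref f n = pref g n ↔ ∀ i < n, f i = g i := by
  simp [pref, List.ofFn_inj, funext_iff, Fin.forall_iff]

lemma pref_ext_s17 (s : List A) (g : ℕ → A) : pref (ext s g) s.length = s := by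
  apply List.ext_getElem (by simp)
  intro i hi _
  simp_all [pref, _root_.ext]

lemma exists_pref_eq [Nonempty A] (t : List A) : ∃ f : ℕ → A, pref f t.length = t :=
  ⟨ext t fun _ => Classical.arbitrary A, pref_ext_s17 t _⟩

lemma ext_pref_shift {s : List A} {f : ℕ → A} (h : pref f s.length = s) :
    ext s (fun n => f (n + s.length)) = f := by
  funext n
  by_cases hn : n < s.length
  · simp only [_root_.ext, dif_pos hn, List.get_eq_getElem]
    rw [← List.getElem_of_eq h (by simpa using hn)]
    simp [pref]
  · simp [_root_.ext, hn, Nat.sub_add_cancel (not_lt.1 hn)]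

lemma pref_eq_take_of_pref_eq {f : ℕ → A} {s : List A} (h : pref f s.length = s) {j : ℕ}
    (hj : j ≤ s.length) : pref f j = s.take j := by
  conv_rhs => rw [← h]
  rw [pref_take, min_eq_left hj]

end Prefixes

lemma Nat.frequently_and_frequently_iff {p q : ℕ → Prop} :
    ((∃ᶠ n in atTop, p n) ∧ ∃ᶠ n in atTop, q n) ↔
      ∃ᶠ n in atTop, q n ∧ ∃ m ≤ n, p m ∧ ∀ k, m ≤ k → k < n → ¬ q k := by
  simp only [frequently_atTop]
  constructor
  · rintro ⟨hp, hq⟩ a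
    obtain ⟨m, ham, hm⟩ := hp a
    have hnext : ∃ n, m ≤ n ∧ q n := hq m
    obtain ⟨hmn, hqn⟩ := Nat.find_spec hnext
    exact ⟨Nat.find hnext, ham.trans hmn, hqn, m, hmn, hm,
      fun k hmk hkn hqk => Nat.find_min hnext hkn ⟨hmk, hqk⟩⟩
  · intro h
    refine ⟨fun a => ?_, fun a => ?_⟩
    · obtain ⟨n₁, ha, hq₁, -⟩ := h a
      obtain ⟨n₂, hn₂, -, m, hmn₂, hpm, hgap⟩ := h (n₁ + 1)
      -- `n₁` is a `q`-point, so it cannot lie in the gap `[m, n₂)`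
      exact ⟨m, le_of_not_gt fun hma => hgap n₁ (by omega) (by omega) hq₁, hpm⟩
    · obtain ⟨n, ha, hqn, -⟩ := h a
      exact ⟨n, ha, hqn⟩

lemma Nat.forall_ge_iff_frequently {p : ℕ → Prop} {N : ℕ} :
    (∀ n ≥ N, p n) ↔ ∃ᶠ n in atTop, ∀ m, N ≤ m → m ≤ n → p m := by
  rw [frequently_atTop]
  constructor
  · exact fun h a => ⟨a, le_rfl, fun m hm _ => h m hm⟩
  · intro h n hn
    obtain ⟨b, hnb, hb⟩ := h n
    exact hb n hn hnb

section Response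

def infOften (S : Set (List A)) : Set (ℕ → A) := {f | ∃ᶠ n in atTop, pref f n ∈ S}

lemma response_iff {P : Set (ℕ → A)} : Response P ↔ ∃ S, P = infOften S := by
  simp [Response, Set.ext_iff, infOften, Nat.frequently_atTop_iff_infinite]

lemma response_univ : Response (Set.univ : Set (ℕ → A)) :=
  ⟨Set.univ, fun _ => by simpa using Set.infinite_univ⟩

lemma Response.inter {R₁ R₂ : Set (ℕ → A)} (h₁ : Response R₁) (h₂ : Response R₂) :
    Response (R₁ ∩ R₂) := by
  obtain ⟨S₁, rfl⟩ := response_iff.1 h₁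
  obtain ⟨S₂, rfl⟩ := response_iff.1 h₂
  -- keep an `S₂`-point only if an `S₁`-point occurred since the previous `S₂`-point
  refine response_iff.2 ⟨{t | t ∈ S₂ ∧ ∃ m ≤ t.length, t.take m ∈ S₁ ∧
    ∀ k, m ≤ k → k < t.length → t.take k ∉ S₂}, Set.ext fun f => ?_⟩
  refine Nat.frequently_and_frequently_iff.trans (frequently_congr (.of_forall fun n => ?_))
  simp +contextual only [Set.mem_ofPred, pref_length, pref_take, le_of_lt, min_eq_left]
  exact and_congr_right fun _ => exists_congr fun m => and_congr_right fun hm => by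
    rw [min_eq_left hm]

lemma response_setOf_forall_ge (N : ℕ) (T : Set (List A)) :
    Response {f : ℕ → A | ∀ n ≥ N, pref f n ∈ T} := by
  refine response_iff.2 ⟨{t | ∀ m, N ≤ m → m ≤ t.length → t.take m ∈ T}, Set.ext fun f => ?_⟩
  refine Nat.forall_ge_iff_frequently.trans (frequently_congr (.of_forall fun n => ?_))
  simp +contextual [pref_take]

lemma Response.compl {R : Set (ℕ → A)} (h : Response R) : Persistence Rᶜ := by
  obtain ⟨S, hS⟩ := h
  refine ⟨Sᶜ, fun f => ?_⟩
  rw [Set.mem_compl_iff, hS, ← Nat.frequently_atTop_iff_infinite, not_frequently, eventually_atTop]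
  rfl

lemma Persistence.compl {Q : Set (ℕ → A)} (h : Persistence Q) : Response Qᶜ := by
  obtain ⟨T, hT⟩ := h
  refine ⟨Tᶜ, fun f => ?_⟩
  rw [Set.mem_compl_iff, hT, ← Nat.frequently_atTop_iff_infinite, ← eventually_atTop,
    not_eventually]
  rfl

end Response

section SigmaResponse

def SigmaResponse (P : Set (ℕ → A)) : Prop :=
  ∃ 𝒮 : Set (Set (ℕ → A)), 𝒮.Countable ∧ (∀ R ∈ 𝒮, Response R) ∧ ⋃₀ 𝒮 = P

lemma Response.sigmaResponse {R : Set (ℕ → A)} (h : Response R) : SigmaResponse R :=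
  ⟨{R}, Set.countable_singleton R, by simpa using h, Set.sUnion_singleton R⟩

lemma SigmaResponse.union {P₁ P₂ : Set (ℕ → A)} (h₁ : SigmaResponse P₁)
    (h₂ : SigmaResponse P₂) : SigmaResponse (P₁ ∪ P₂) := by
  obtain ⟨𝒮₁, hc₁, hr₁, rfl⟩ := h₁
  obtain ⟨𝒮₂, hc₂, hr₂, rfl⟩ := h₂
  exact ⟨𝒮₁ ∪ 𝒮₂, hc₁.union hc₂, fun R hR => hR.elim (hr₁ R) (hr₂ R), Set.sUnion_union 𝒮₁ 𝒮₂⟩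

lemma SigmaResponse.inter {P₁ P₂ : Set (ℕ → A)} (h₁ : SigmaResponse P₁)
    (h₂ : SigmaResponse P₂) : SigmaResponse (P₁ ∩ P₂) := by
  obtain ⟨𝒮₁, hc₁, hr₁, rfl⟩ := h₁
  obtain ⟨𝒮₂, hc₂, hr₂, rfl⟩ := h₂
  refine ⟨(fun p => p.1 ∩ p.2) '' (𝒮₁ ×ˢ 𝒮₂), (hc₁.prod hc₂).image _, ?_, ?_⟩
  · rintro _ ⟨⟨R₁, R₂⟩, ⟨hR₁, hR₂⟩, rfl⟩
    exact (hr₁ R₁ hR₁).inter (hr₂ R₂ hR₂)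
  · rw [Set.sUnion_image, Set.sUnion_inter_sUnion]

lemma SigmaResponse.iUnion {ι : Sort*} [Countable ι] {P : ι → Set (ℕ → A)}
    (h : ∀ i, SigmaResponse (P i)) : SigmaResponse (⋃ i, P i) := by
  choose 𝒮 hc hr hU using h
  refine ⟨⋃ i, 𝒮 i, Set.countable_iUnion hc, fun R hR => ?_, by simp [Set.sUnion_iUnion, hU]⟩
  obtain ⟨i, hi⟩ := Set.mem_iUnion.1 hR
  exact hr i R hi

lemma SigmaResponse.iInter {ι : Type*} [Finite ι] {P : ι → Set (ℕ → A)}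
    (h : ∀ i, SigmaResponse (P i)) : SigmaResponse (⋂ i, P i) := by
  classical
  have hfin : ∀ s : Finset ι, SigmaResponse (⋂ i ∈ s, P i) := by
    intro s
    induction s using Finset.induction_on with
    | empty => simpa using response_univ.sigmaResponse
    | insert i s _ ih => simpa only [Finset.set_biInter_insert] using (h i).inter ih
  have := Fintype.ofFinite ι
  simpa using hfin Finset.univ

lemma Persistence.sigmaResponse {Q : Set (ℕ → A)} (h : Persistence Q) : SigmaResponse Q := by
  obtain ⟨T, hT⟩ := h
  have hQ : Q = ⋃ N, {f | ∀ n ≥ N, pref f n ∈ T} := by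
    ext f
    simp [hT]
  rw [hQ]
  exact .iUnion fun N => (response_setOf_forall_ge N T).sigmaResponse

lemma Reactivity.sigmaResponse {P : Set (ℕ → A)} (h : Reactivity P) :
    SigmaResponse P ∧ SigmaResponse Pᶜ := by
  obtain ⟨k, -, R, Q, hR, hQ, rfl⟩ := h
  refine ⟨.iInter fun i => (hR i).sigmaResponse.union (hQ i).sigmaResponse, ?_⟩
  rw [Set.compl_iInter]
  refine .iUnion fun i => ?_
  rw [Set.compl_union]
  exact (hR i).compl.sigmaResponse.inter (hQ i).compl.sigmaResponse

end SigmaResponse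

section Baire

lemma mem_cylinder_iff_pref_eq {f g : ℕ → A} {n : ℕ} :
    f ∈ PiNat.cylinder g n ↔ pref f n = pref g n := by
  rw [PiNat.mem_cylinder_iff, pref_eq_pref_iff]

lemma exists_prefix_forall_extension_mem [Nonempty A] {ι : Type*} [Countable ι]
    (F : ι → Set (ℕ → A)) (hF : ⋃ c, F c = Set.univ) (t : List A) :
    ∃ t' c, t <+: t' ∧ ∀ v, t' <+: v → ∃ f ∈ F c, pref f v.length = v := by
  let _ : TopologicalSpace A := ⊥
  have : DiscreteTopology A := ⟨rfl⟩
  have hdense : Dense (⋃ c, interior (closure (F c))) :=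
    dense_iUnion_interior_of_closed (fun c => isClosed_closure)
      (Set.eq_univ_of_subset (Set.iUnion_mono fun c => subset_closure) hF)
  obtain ⟨g, hg⟩ := exists_pref_eq t
  obtain ⟨h, hhg, hh⟩ := hdense.inter_open_nonempty _ (PiNat.isOpen_cylinder _ g t.length)
    ⟨g, PiNat.self_mem_cylinder g _⟩
  obtain ⟨c, hc⟩ := Set.mem_iUnion.1 hh
  obtain ⟨_, ⟨x, m, rfl⟩, hhx, hm⟩ :=
    (PiNat.isTopologicalBasis_cylinders _).mem_nhds_iff.1 (isOpen_interior.mem_nhds hc)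
  rw [← PiNat.mem_cylinder_iff_eq.1 hhx] at hm
  refine ⟨pref h (max m t.length), c, ?_, fun v hv => ?_⟩
  · have ht : pref h t.length = t := (mem_cylinder_iff_pref_eq.1 hhg).trans hg
    simpa only [ht] using pref_prefix h (le_max_right m t.length)
  obtain ⟨h', hh'⟩ := exists_pref_eq v
  have hh'h : h' ∈ PiNat.cylinder h (max m t.length) :=
    mem_cylinder_iff_pref_eq.2 (by simpa using pref_eq_of_prefix hv hh')
  obtain ⟨f, hf, hfF⟩ := mem_closure_iff.1
    (interior_subset (hm (PiNat.cylinder_anti h (le_max_left _ _) hh'h)))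
    _ (PiNat.isOpen_cylinder _ h' v.length) (PiNat.self_mem_cylinder h' _)
  exact ⟨f, hfF, (mem_cylinder_iff_pref_eq.1 hf).trans hh'⟩

end Baire

section Monitor

variable {ι : Type*} (anchor : List A → List A) (piece : List A → ι) (S : ι → Set (List A))
  (side : ι → Bool)

/-- The shortest prefix of `t` whose anchor `t` already extends; `[]` (as `sInf ∅ = 0`) if there
is none, in which case `monitor` answers `none`. -/
noncomputable def anchorKey (t : List A) : List A :=
  t.take (sInf {j | anchor (t.take j) <+: t})

noncomputable def monitor (t : List A) : Option Bool :=
  if anchor (anchorKey anchor t) <+: t ∧ t ∈ S (piece (anchorKey anchor t)) then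
    some (side (piece (anchorKey anchor t)))
  else none

variable {anchor} in
lemma eventually_anchorKey_pref {f : ℕ → A} {J : ℕ}
    (hJ : pref f (anchor (pref f J)).length = anchor (pref f J))
    (hmin : ∀ j < J, pref f (anchor (pref f j)).length ≠ anchor (pref f j)) :
    ∀ᶠ n in atTop, anchorKey anchor (pref f n) = pref f J := by
  filter_upwards [eventually_ge_atTop J, eventually_ge_atTop (anchor (pref f J)).length]
    with n hJn hn
  have hmem : J ∈ {j | anchor ((pref f n).take j) <+: pref f n} := by
    simpa [pref_take, min_eq_left hJn, prefix_pref_iff, hn] using hJ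
  have hle : ∀ j ∈ {j | anchor ((pref f n).take j) <+: pref f n}, J ≤ j := by
    intro j hj
    refine le_of_not_gt fun hjJ => hmin j hjJ (prefix_pref_iff (n := n) |>.1 ?_).2
    simpa [pref_take, min_eq_left (hjJ.le.trans hJn)] using hj
  rw [anchorKey, le_antisymm (Nat.sInf_le hmem) (le_csInf ⟨J, hmem⟩ hle), pref_take,
    min_eq_left hJn]

variable {anchor} in
lemma eventually_monitor_pref {f : ℕ → A} {J : ℕ}
    (hJ : pref f (anchor (pref f J)).length = anchor (pref f J))
    (hmin : ∀ j < J, pref f (anchor (pref f j)).length ≠ anchor (pref f j)) :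
    ∀ᶠ n in atTop, monitor anchor piece S side (pref f n) =
      if pref f n ∈ S (piece (pref f J)) then some (side (piece (pref f J))) else none := by
  filter_upwards [eventually_anchorKey_pref hJ hmin,
    eventually_ge_atTop (anchor (pref f J)).length] with n hkey hn
  simp [monitor, hkey, prefix_pref_iff, hn, hJ]

lemma monitor_sound {P : Set (ℕ → A)}
    (hside : ∀ c, ∀ f ∈ infOften (S c), (side c = true ↔ f ∈ P)) {f : ℕ → A} {b : Bool}
    (h : ∃ᶠ n in atTop, monitor anchor piece S side (pref f n) = some b) :
    b = true ↔ f ∈ P := by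
  have hex : ∃ j, pref f (anchor (pref f j)).length = anchor (pref f j) := by
    obtain ⟨n, hn⟩ := h.exists
    have hpre : anchor (anchorKey anchor (pref f n)) <+: pref f n := by
      by_contra hc
      simp [monitor, hc] at hn
    rw [anchorKey, pref_take] at hpre
    exact ⟨_, (prefix_pref_iff.1 hpre).2⟩
  set c := piece (pref f (Nat.find hex))
  have hfreq : ∃ᶠ n in atTop, pref f n ∈ S c ∧ side c = b := by
    refine (h.and_eventually (eventually_monitor_pref piece S side (Nat.find_spec hex)
      fun j => Nat.find_min hex)).mono fun n ⟨hb, heq⟩ => ?_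
    rw [heq] at hb
    split_ifs at hb with hS
    exact ⟨hS, Option.some_inj.1 hb⟩
  obtain ⟨_, -, rfl⟩ := hfreq.exists
  exact hside c f (hfreq.mono fun n hn => hn.1)

lemma exists_extension_eventually_monitor (hanchor : ∀ t, t <+: anchor t)
    (hdense : ∀ t v, anchor t <+: v → ∃ f ∈ infOften (S (piece t)), pref f v.length = v)
    (s : List A) :
    ∃ F c, pref F s.length = s ∧ F ∈ infOften (S c) ∧ ∀ᶠ n in atTop,
      monitor anchor piece S side (pref F n) = if pref F n ∈ S c then some (side c) else none := by
  have hex : ∃ j, anchor (s.take j) <+: s ∨ s <+: anchor (s.take j) :=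
    ⟨s.length, Or.inr (by simpa using hanchor s)⟩
  set J := Nat.find hex
  have hJs : J ≤ s.length := Nat.find_min' hex (Or.inr (by simpa using hanchor s))
  obtain ⟨v, hsv, hav⟩ : ∃ v, s <+: v ∧ anchor (s.take J) <+: v :=
    (Nat.find_spec hex).elim (fun h => ⟨s, List.prefix_rfl, h⟩) (fun h => ⟨_, h, List.prefix_rfl⟩)
  obtain ⟨F, hF, hFv⟩ := hdense _ v hav
  have hFs := pref_eq_of_prefix hsv hFv
  have hFJ := pref_eq_take_of_pref_eq hFs hJs
  refine ⟨F, piece (s.take J), hFs, hF, ?_⟩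
  rw [← hFJ]
  refine eventually_monitor_pref piece S side (hFJ ▸ pref_eq_of_prefix hav hFv) fun j hj hanc => ?_
  rw [pref_eq_take_of_pref_eq hFs (hj.le.trans hJs)] at hanc
  exact Nat.find_min hex hj (prefix_or_prefix_of_pref_eq hanc hFs)

end Monitor

def IsExistentiallyMonitorable (P : Set (ℕ → A)) : Prop :=
  ∃ u : List A → Option Bool,
    (∀ f : ℕ → A,
      ¬({n : ℕ | u (pref f n) = some true}.Infinite ∧
        {n : ℕ | u (pref f n) = some false}.Infinite)) ∧
    (∀ (f : ℕ → A) (b : Bool),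
      {n : ℕ | u (pref f n) = some b}.Infinite →
      {n : ℕ | u (pref f n) = some (!b)}.Finite →
      (b = true ↔ f ∈ P)) ∧
    (∀ s : List A, ∃ f : ℕ → A,
      {n : ℕ | u (pref (ext s f) n) = some (decide (ext s f ∈ P))}.Infinite ∧
      {n : ℕ | u (pref (ext s f) n) = some (!(decide (ext s f ∈ P)))}.Finite)

theorem isExistentiallyMonitorable_of_cover [Nonempty A] {ι : Type*} [Countable ι]
    {P : Set (ℕ → A)} (S : ι → Set (List A)) (hcover : ⋃ c, infOften (S c) = Set.univ)
    (hhom : ∀ c, infOften (S c) ⊆ P ∨ infOften (S c) ⊆ Pᶜ) : IsExistentiallyMonitorable P := by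
  choose anchor piece hanchor hdense using exists_prefix_forall_extension_mem _ hcover
  let side c := decide (infOften (S c) ⊆ P)
  have hside : ∀ c, ∀ f ∈ infOften (S c), (side c = true ↔ f ∈ P) := fun c f hf => by
    rcases hhom c with h | h
    · simp [side, h, h hf]
    · simp only [side, decide_eq_true_eq]
      exact iff_of_false (fun hP => h hf (hP hf)) (h hf)
  let u := monitor anchor piece S side
  have hsound : ∀ f b, {n | u (pref f n) = some b}.Infinite → (b = true ↔ f ∈ P) :=
    fun f b h => monitor_sound anchor piece S side hside (Nat.frequently_atTop_iff_infinite.2 h)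
  refine ⟨u, fun f ⟨htrue, hfalse⟩ => ?_, fun f b h _ => hsound f b h, fun s => ?_⟩
  · exact Bool.false_ne_true ((hsound f false hfalse).2 ((hsound f true htrue).1 rfl))
  obtain ⟨F, c, hFs, hF, hev⟩ :=
    exists_extension_eventually_monitor anchor piece S side hanchor hdense s
  refine ⟨fun n => F (n + s.length), ?_⟩
  have hc : decide (F ∈ P) = side c := by
    rw [Bool.eq_iff_iff, decide_eq_true_iff, hside c F hF]
  rw [ext_pref_shift hFs, hc]
  constructor
  · refine Nat.frequently_atTop_iff_infinite.1 ((hF.and_eventually hev).mono ?_)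
    rintro n ⟨hn, heq⟩
    simp [u, heq, hn]
  · refine Set.not_infinite.1 fun hinf => ?_
    obtain ⟨n, hn, heq⟩ := (Nat.frequently_atTop_iff_infinite.2 hinf).and_eventually hev |>.exists
    rw [show u (pref F n) = _ from heq] at hn
    split_ifs at hn
    simp at hn

theorem SigmaResponse.isExistentiallyMonitorable [Nonempty A] {P : Set (ℕ → A)}
    (hP : SigmaResponse P) (hPc : SigmaResponse Pᶜ) : IsExistentiallyMonitorable P := by
  obtain ⟨𝒮₁, hc₁, hr₁, hU₁⟩ := hP
  obtain ⟨𝒮₂, hc₂, hr₂, hU₂⟩ := hPc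
  have := (hc₁.union hc₂).to_subtype
  choose S hS using fun R : ↥(𝒮₁ ∪ 𝒮₂) => response_iff.1 (R.2.elim (hr₁ R) (hr₂ R))
  refine isExistentiallyMonitorable_of_cover S ?_ fun R => ?_
  · simp_rw [← hS]
    rw [← Set.sUnion_eq_iUnion, Set.sUnion_union, hU₁, hU₂, Set.union_compl_self]
  · rw [← hS R]
    exact R.2.imp (fun h => hU₁ ▸ Set.subset_sUnion_of_mem h)
      (fun h => hU₂ ▸ Set.subset_sUnion_of_mem h)

end

theorem reactivity_existentially_monitorable_general {A : Type*} [Nonempty A]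
    (P : Set (ℕ → A)) (hP : Reactivity P) :
    ∃ u : List A → Option Bool,
      (∀ f : ℕ → A,
        ¬({n : ℕ | u (pref f n) = some true}.Infinite ∧
          {n : ℕ | u (pref f n) = some false}.Infinite)) ∧
      (∀ (f : ℕ → A) (b : Bool),
        {n : ℕ | u (pref f n) = some b}.Infinite →
        {n : ℕ | u (pref f n) = some (!b)}.Finite →
        (b = true ↔ f ∈ P)) ∧
      (∀ s : List A, ∃ f : ℕ → A,
        {n : ℕ | u (pref (ext s f) n) = some (decide (ext s f ∈ P))}.Infinite ∧
        {n : ℕ | u (pref (ext s f) n) = some (!(decide (ext s f ∈ P)))}.Finite) :=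
  hP.sigmaResponse.1.isExistentiallyMonitorable hP.sigmaResponse.2

theorem reactivity_existentially_monitorable {A : Type*} [Fintype A] [Nonempty A]
    (P : Set (ℕ → A)) (hP : Reactivity P) :
    ∃ u : List A → Option Bool,
      (∀ f : ℕ → A,
        ¬({n : ℕ | u (pref f n) = some true}.Infinite ∧
          {n : ℕ | u (pref f n) = some false}.Infinite)) ∧
      (∀ (f : ℕ → A) (b : Bool),
        {n : ℕ | u (pref f n) = some b}.Infinite →
        {n : ℕ | u (pref f n) = some (!b)}.Finite →
        (b = true ↔ f ∈ P)) ∧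
      (∀ s : List A, ∃ f : ℕ → A,
        {n : ℕ | u (pref (ext s f) n) = some (decide (ext s f ∈ P))}.Infinite ∧
        {n : ℕ | u (pref (ext s f) n) = some (!(decide (ext s f ∈ P)))}.Finite) :=
  reactivity_existentially_monitorable_general P hP
end
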